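/- Let P be an n-element poset and L a labeling of P. Then L is a periodic point of extended promotion (i.e., ∂^k(L) = L for some integer k ≥ 1) if and only if L is a linear extension of P. -/

import Mathlib

/-!
After `a` promotions the top `a` labels are frozen: for every `t ≥ n - a` the elements with label
at least `t` form an upper set. The step from `L` to `∂(L)` works because `∂(L)(x) + 1` is the
`L`-label either of `x` itself (off the promotion chain) or of its chain successor, the element
above `x` with the least label; only the top of the chain is different, and it receives `n`.
A periodic point equals its `kn`-th promotion, so all its label sets are upper sets: it is a
linear extension.

Conversely promotion maps linear extensions to linear extensions, and there it is undone by
demotion: for a linear extension `L`, the promotion chain is recovered from `∂(L)` by starting at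
the element labelled `n` and repeatedly stepping to the element below with the largest label.
So promotion is injective on the finite set of linear extensions, hence permutes it.
-/

open scoped Classical

noncomputable section

abbrev Labeling (P : Type*) [Fintype P] : Type _ := P ≃ Fin (Fintype.card P)

variable {P : Type*} [Fintype P] [PartialOrder P]

def IsLinearExt (L : Labeling P) : Prop := ∀ x y : P, x ≤ y → L x ≤ L y

def lSucc (L : Labeling P) (v : P)
    (h : (Finset.univ.filter fun y => v < y).Nonempty) : P :=
  L.symm (((Finset.univ.filter fun y => v < y).image L).min' (h.image _))

lemma lt_lSucc (L : Labeling P) (v : P)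
    (h : (Finset.univ.filter fun y => v < y).Nonempty) : v < lSucc L v h := by
  have hmem := Finset.min'_mem ((Finset.univ.filter fun y => v < y).image L) (h.image _)
  obtain ⟨y, hy, hLy⟩ := Finset.mem_image.mp hmem
  have heq : lSucc L v h = y := by
    unfold lSucc
    rw [← hLy, Equiv.symm_apply_apply]
  rw [heq]
  exact (Finset.mem_filter.mp hy).2

def promChainFrom (L : Labeling P) (v : P) : List P :=
  if h : (Finset.univ.filter fun y => v < y).Nonempty then
    v :: promChainFrom L (lSucc L v h)
  else [v]
termination_by (Finset.univ.filter fun y => v < y).card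
decreasing_by
  apply Finset.card_lt_card
  refine (Finset.ssubset_iff_of_subset ?_).mpr ?_
  · intro z hz
    simp only [Finset.mem_filter, Finset.mem_univ, true_and] at *
    exact lt_trans (lt_lSucc L v h) hz
  · exact ⟨lSucc L v h, by simp [lt_lSucc L v h], by simp⟩

def promote (L : Labeling P) : Labeling P :=
  if h : Nonempty P then
    ((List.formPerm (promChainFrom L (L.symm ⟨0, @Fintype.card_pos P _ h⟩))).trans L).trans
      (finRotate (Fintype.card P)).symm
  else L

/-- The label of `x` under `L`, as an integer in `{1, …, n}`. -/
def labelOf (L : Labeling P) (x : P) : ℕ := (L x : ℕ) + 1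

/-- The largest `a ∈ {0, …, n}` such that for all `j ∈ {n−a+1, …, n}`, the set
`{x ∈ P : j ≤ L(x) ≤ n}` is an upper order ideal of `P`. -/
def frozenA (L : Labeling P) : ℕ :=
  sSup {a : ℕ | a ≤ Fintype.card P ∧
    ∀ j, Fintype.card P - a + 1 ≤ j → j ≤ Fintype.card P →
      IsUpperSet {x : P | j ≤ labelOf L x ∧ labelOf L x ≤ Fintype.card P}}

/-- `x` is frozen with respect to `L` if `n − a + 1 ≤ L(x) ≤ n`, where `a` is as in `frozenA`. -/
def IsFrozen (L : Labeling P) (x : P) : Prop :=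
  Fintype.card P - frozenA L + 1 ≤ labelOf L x

/-- A labeling of an `n`-element poset is tangled if `n ≥ 2` and `∂^{n−2}(L)` is
not a linear extension. -/
def IsTangled (L : Labeling P) : Prop :=
  2 ≤ Fintype.card P ∧ ¬ IsLinearExt (promote^[Fintype.card P - 2] L)

/-- A labeling of an `n`-element poset is `k`-untangled if `n ≥ k + 2` and
`∂^{n−k−2}(L)` is not a linear extension. -/
def IsUntangled (k : ℕ) (L : Labeling P) : Prop :=
  k + 2 ≤ Fintype.card P ∧ ¬ IsLinearExt (promote^[Fintype.card P - k - 2] L)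

/-- The comparability graph of a poset. -/
def compGraph (P : Type*) [PartialOrder P] : SimpleGraph P where
  Adj x y := x ≠ y ∧ (x ≤ y ∨ y ≤ x)
  symm := by
    constructor
    intro x y hxy
    exact ⟨hxy.1.symm, hxy.2.symm⟩
  loopless := by
    constructor
    intro x hx
    exact hx.1 rfl

/-- The standardization of an injective map from a finite type into a linear order:
the unique relabeling by `{1, …, n}` with the same relative order of values. -/
def standardize {R β : Type*} [Fintype R] [LinearOrder β]
    (f : R → β) (hf : Function.Injective f) : R ≃ Fin (Fintype.card R) :=
  have hcard : (Finset.univ.image f).card = Fintype.card R := by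
    rw [Finset.card_image_of_injective _ hf, Finset.card_univ]
  (Equiv.ofBijective (fun x => (⟨f x, by simp⟩ : ↥(Finset.univ.image f)))
    (by
      rw [Fintype.bijective_iff_injective_and_card]
      refine ⟨fun a b hab => hf (congrArg Subtype.val hab), ?_⟩
      rw [Fintype.card_coe, hcard])).trans
    ((Finset.univ.image f).orderIsoOfFin hcard).symm.toEquiv

/-- The toggle operator `τ_{k+1}`: it swaps the labels `k+1` and `k+2` (i.e. the
`Fin`-labels `k` and `k+1`) unless `L⁻¹(k+1) <_P L⁻¹(k+2)`. -/
def toggle (L : Labeling P) (k : ℕ) : Labeling P :=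
  if h : k + 1 < Fintype.card P then
    if L.symm ⟨k, Nat.lt_of_succ_lt h⟩ < L.symm ⟨k + 1, h⟩ then L
    else L.trans (Equiv.swap ⟨k, Nat.lt_of_succ_lt h⟩ ⟨k + 1, h⟩)
  else L

/-- An element `x` is `L`-golden if every element strictly above it has a larger label. -/
def IsGolden (L : Labeling P) (x : P) : Prop := ∀ y : P, x < y → L x < L y

/-- The largest label `n` of an `n`-element poset, as an element of `Fin n`. -/
def topFin (P : Type*) [Fintype P] [Nonempty P] : Fin (Fintype.card P) :=
  ⟨Fintype.card P - 1, Nat.sub_lt Fintype.card_pos Nat.one_pos⟩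

lemma Set.MapsTo.mem_periodicPts_of_injOn {α : Type*} [Finite α] {f : α → α} {s : Set α}
    (hf : Set.MapsTo f s s) (hinj : Set.InjOn f s) {x : α} (hx : x ∈ s) :
    x ∈ Function.periodicPts f := by
  obtain ⟨k, hk, hper⟩ := (hf.restrict_inj.mpr hinj).mem_periodicPts ⟨x, hx⟩
  exact Function.mk_mem_periodicPts hk (hper.map (g := Subtype.val) (fb := f) fun _ => rfl)

section PromotionChain

variable (L : Labeling P)

lemma promChainFrom_of_nonempty {v : P} (h : (Finset.univ.filter fun y => v < y).Nonempty) :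
    promChainFrom L v = v :: promChainFrom L (lSucc L v h) := by
  rw [promChainFrom, dif_pos h]

lemma promChainFrom_of_not_nonempty {v : P}
    (h : ¬ (Finset.univ.filter fun y => v < y).Nonempty) : promChainFrom L v = [v] := by
  rw [promChainFrom, dif_neg h]

lemma exists_promChainFrom_eq_cons (v : P) : ∃ t, promChainFrom L v = v :: t := by
  by_cases h : (Finset.univ.filter fun y => v < y).Nonempty
  · exact ⟨_, promChainFrom_of_nonempty L h⟩
  · exact ⟨[], promChainFrom_of_not_nonempty L h⟩

lemma mem_promChainFrom_self (v : P) : v ∈ promChainFrom L v := by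
  obtain ⟨t, ht⟩ := exists_promChainFrom_eq_cons L v
  simp [ht]

lemma le_of_mem_promChainFrom {v x : P} (hx : x ∈ promChainFrom L v) : v ≤ x := by
  induction v using promChainFrom.induct L with
  | case1 v h ih =>
    rw [promChainFrom_of_nonempty L h, List.mem_cons] at hx
    rcases hx with rfl | hx
    · rfl
    · exact (lt_lSucc L v h).le.trans (ih hx)
  | case2 v h =>
    rw [promChainFrom_of_not_nonempty L h, List.mem_singleton] at hx
    exact hx.ge

lemma le_total_of_mem_promChainFrom {v x y : P} (hx : x ∈ promChainFrom L v)
    (hy : y ∈ promChainFrom L v) : x ≤ y ∨ y ≤ x := by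
  induction v using promChainFrom.induct L with
  | case1 v h ih =>
    obtain rfl | hx' := List.mem_cons.mp (by rwa [promChainFrom_of_nonempty L h] at hx)
    · exact .inl (le_of_mem_promChainFrom L hy)
    obtain rfl | hy' := List.mem_cons.mp (by rwa [promChainFrom_of_nonempty L h] at hy)
    · exact .inr (le_of_mem_promChainFrom L hx)
    exact ih hx' hy'
  | case2 v h =>
    rw [promChainFrom_of_not_nonempty L h, List.mem_singleton] at hx hy
    exact .inl (hx.trans hy.symm).le

lemma exists_mem_promChainFrom_not_nonempty (v : P) :
    ∃ x ∈ promChainFrom L v, ¬ (Finset.univ.filter fun y => x < y).Nonempty := by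
  induction v using promChainFrom.induct L with
  | case1 v h ih =>
    obtain ⟨x, hx, hmax⟩ := ih
    exact ⟨x, by rw [promChainFrom_of_nonempty L h]; exact List.mem_cons_of_mem _ hx, hmax⟩
  | case2 v h => exact ⟨v, mem_promChainFrom_self L v, h⟩

lemma apply_lSucc_le {v z : P} (h : (Finset.univ.filter fun y => v < y).Nonempty) (hz : v < z) :
    L (lSucc L v h) ≤ L z := by
  rw [lSucc, Equiv.apply_symm_apply]
  exact Finset.min'_le _ _ (Finset.mem_image_of_mem _ (by simp [hz]))

lemma formPerm_promChainFrom_of_nonempty {v x : P} (hx : x ∈ promChainFrom L v)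
    (h : (Finset.univ.filter fun y => x < y).Nonempty) :
    (promChainFrom L v).formPerm x = lSucc L x h := by
  induction v using promChainFrom.induct L with
  | case1 v hv ih =>
    set w := lSucc L v hv
    have hvw : v < w := lt_lSucc L v hv
    obtain ⟨t, ht⟩ := exists_promChainFrom_eq_cons L w
    rw [promChainFrom_of_nonempty L hv, List.mem_cons] at hx
    rw [promChainFrom_of_nonempty L hv, ht, List.formPerm_cons_cons, Equiv.Perm.mul_apply]
    rcases hx with rfl | hx
    · have hxt : x ∉ w :: t := fun hmem =>
        hvw.not_ge (le_of_mem_promChainFrom L (ht ▸ hmem : x ∈ promChainFrom L w))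
      rw [List.formPerm_apply_of_notMem hxt, Equiv.swap_apply_left]
    · have hwx := le_of_mem_promChainFrom L hx
      have hxs := lt_lSucc L x h
      rw [← ht, ih hx]
      exact Equiv.swap_apply_of_ne_of_ne (hvw.trans_le (hwx.trans hxs.le)).ne'
        (hwx.trans_lt hxs).ne'
  | case2 v hv =>
    rw [promChainFrom_of_not_nonempty L hv, List.mem_singleton] at hx
    exact absurd (hx ▸ h) hv

lemma formPerm_promChainFrom_of_not_nonempty {v x : P} (hx : x ∈ promChainFrom L v)
    (h : ¬ (Finset.univ.filter fun y => x < y).Nonempty) :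
    (promChainFrom L v).formPerm x = v := by
  induction v using promChainFrom.induct L with
  | case1 v hv ih =>
    obtain ⟨t, ht⟩ := exists_promChainFrom_eq_cons L (lSucc L v hv)
    rw [promChainFrom_of_nonempty L hv, List.mem_cons] at hx
    rcases hx with rfl | hx
    · exact absurd hv h
    rw [promChainFrom_of_nonempty L hv, ht, List.formPerm_cons_cons, Equiv.Perm.mul_apply, ← ht,
      ih hx, Equiv.swap_apply_right]
  | case2 v hv =>
    rw [promChainFrom_of_not_nonempty L hv, List.mem_singleton] at hx
    rw [promChainFrom_of_not_nonempty L hv, List.formPerm_singleton, hx]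
    rfl

end PromotionChain

section Promotion

variable [Nonempty P] (L : Labeling P)

def firstLabeled : P := L.symm ⟨0, Fintype.card_pos⟩

def promChain : List P := promChainFrom L (firstLabeled L)

lemma promote_apply (x : P) :
    promote L x = (finRotate _).symm (L ((promChain L).formPerm x)) := by
  rw [promote, dif_pos ‹Nonempty P›]
  rfl

lemma val_finRotate_symm_add_one {n : ℕ} [NeZero n] {i : Fin n} (hi : i ≠ 0) :
    ((finRotate n).symm i : ℕ) + 1 = i := by
  have := Fin.pos_iff_ne_zero.mpr hi
  rw [coe_finRotate_symm_of_ne_zero hi]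
  omega

lemma finRotate_symm_mk_zero {n : ℕ} (h : 0 < n) :
    (finRotate n).symm ⟨0, h⟩ = ⟨n - 1, by omega⟩ := by
  obtain ⟨m, rfl⟩ : ∃ m, n = m + 1 := ⟨n - 1, by omega⟩
  rw [Equiv.symm_apply_eq]
  exact finRotate_last'.symm

lemma promote_add_one_of_notMem {x : P} (hx : x ∉ promChain L) :
    (promote L x : ℕ) + 1 = L x := by
  rw [promote_apply, List.formPerm_apply_of_notMem hx]
  refine val_finRotate_symm_add_one fun h0 => hx ?_
  rw [← L.symm_apply_apply x, h0]
  exact mem_promChainFrom_self L _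

lemma promote_add_one_of_mem {x : P} (hx : x ∈ promChain L)
    (h : (Finset.univ.filter fun y => x < y).Nonempty) :
    (promote L x : ℕ) + 1 = L (lSucc L x h) := by
  rw [promote_apply, promChain, formPerm_promChainFrom_of_nonempty L hx h]
  refine val_finRotate_symm_add_one fun h0 => (lt_lSucc L x h).not_ge ?_
  rw [← L.symm_apply_apply (lSucc L x h), h0]
  exact le_of_mem_promChainFrom L hx

lemma promote_of_mem_of_not_nonempty {x : P} (hx : x ∈ promChain L)
    (h : ¬ (Finset.univ.filter fun y => x < y).Nonempty) : promote L x = topFin P := by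
  rw [promote_apply, promChain, formPerm_promChainFrom_of_not_nonempty L hx h, firstLabeled,
    Equiv.apply_symm_apply, finRotate_symm_mk_zero]
  rfl

lemma promote_eq_topFin_or_exists_le (y : P) :
    promote L y = topFin P ∨ ∃ z, y ≤ z ∧ (promote L y : ℕ) + 1 = L z := by
  by_cases hy : y ∈ promChain L
  · by_cases h : (Finset.univ.filter fun z => y < z).Nonempty
    · exact .inr ⟨_, (lt_lSucc L y h).le, promote_add_one_of_mem L hy h⟩
    · exact .inl (promote_of_mem_of_not_nonempty L hy h)
  · exact .inr ⟨y, le_rfl, promote_add_one_of_notMem L hy⟩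

end Promotion

lemma IsLinearExt.apply_lt_apply {L : Labeling P} (hL : IsLinearExt L) {x y : P} (hxy : x < y) :
    L x < L y :=
  (hL x y hxy.le).lt_of_ne (L.injective.ne hxy.ne)

section Freezing

-- Labels are `Fin n`-valued: `t ≥ n - a` ranges over the paper's top labels `n - a + 1, …, n`.
def TopLabelsFrozen (L : Labeling P) (a : ℕ) : Prop :=
  ∀ t : ℕ, Fintype.card P - a ≤ t → IsUpperSet {x | t ≤ (L x : ℕ)}

lemma topLabelsFrozen_zero (L : Labeling P) : TopLabelsFrozen L 0 := by
  intro t ht x _ _ hx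
  have := (L x).isLt
  simp only [Set.mem_ofPred_eq] at hx
  omega

lemma IsLinearExt.topLabelsFrozen {L : Labeling P} (hL : IsLinearExt L) (a : ℕ) :
    TopLabelsFrozen L a :=
  fun _ _ _ _ hxy hx => Nat.le_trans hx (hL _ _ hxy)

lemma TopLabelsFrozen.isLinearExt {L : Labeling P} {a : ℕ} (h : TopLabelsFrozen L a)
    (ha : Fintype.card P ≤ a) : IsLinearExt L :=
  fun x _ hxy => h (L x) (by omega) hxy (Nat.le_refl _)

variable [Nonempty P]

lemma TopLabelsFrozen.promote {L : Labeling P} {a : ℕ} (hL : TopLabelsFrozen L a) :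
    TopLabelsFrozen (promote L) (a + 1) := by
  intro t ht x y hxy hx
  simp only [Set.mem_ofPred_eq] at hx ⊢
  obtain rfl | hlt := hxy.eq_or_lt
  · exact hx
  have above : ∀ z, x < z → t + 1 ≤ (L z : ℕ) := by
    intro z hxz
    by_cases hxC : x ∈ promChain L
    · have hx' := promote_add_one_of_mem L hxC ⟨z, by simpa using hxz⟩
      have := Fin.le_def.mp (apply_lSucc_le L ⟨z, by simpa using hxz⟩ hxz)
      omega
    · have hx' := promote_add_one_of_notMem L hxC
      exact hL (t + 1) (by omega) hxz.le (by simp only [Set.mem_ofPred_eq]; omega)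
  rcases promote_eq_topFin_or_exists_le L y with hy | ⟨z, hyz, hy⟩
  · have := (_root_.promote L x).isLt
    simp only [hy, topFin]
    omega
  · have := above z (hlt.trans_le hyz)
    omega

lemma topLabelsFrozen_promote_iterate (L : Labeling P) (k : ℕ) :
    TopLabelsFrozen (promote^[k] L) k := by
  induction k with
  | zero => exact topLabelsFrozen_zero L
  | succ k ih =>
    rw [Function.iterate_succ_apply']
    exact ih.promote

lemma IsLinearExt.promote {L : Labeling P} (hL : IsLinearExt L) : IsLinearExt (promote L) :=
  (hL.topLabelsFrozen _).promote.isLinearExt (Nat.le_succ _)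

end Freezing

section Demotion

def lPred (M : Labeling P) (v : P) (h : (Finset.univ.filter fun y => y < v).Nonempty) : P :=
  M.symm (((Finset.univ.filter fun y => y < v).image M).max' (h.image _))

lemma lPred_lt (M : Labeling P) (v : P) (h : (Finset.univ.filter fun y => y < v).Nonempty) :
    lPred M v h < v := by
  obtain ⟨y, hy, hMy⟩ := Finset.mem_image.mp (Finset.max'_mem _ (h.image M))
  rw [lPred, ← hMy, Equiv.symm_apply_apply]
  exact (Finset.mem_filter.mp hy).2

lemma lPred_eq_of_forall_le {M : Labeling P} {x v : P} (hxv : x < v)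
    (hmax : ∀ w, w < v → M w ≤ M x) (h : (Finset.univ.filter fun y => y < v).Nonempty) :
    lPred M v h = x := by
  rw [lPred, Equiv.symm_apply_eq]
  refine le_antisymm (Finset.max'_le _ _ _ fun _ hw => ?_)
    (Finset.le_max' _ _ (Finset.mem_image_of_mem _ (by simpa using hxv)))
  obtain ⟨w, hw, rfl⟩ := Finset.mem_image.mp hw
  exact hmax w (by simpa using hw)

def demChainFrom (M : Labeling P) (v : P) : List P :=
  if h : (Finset.univ.filter fun y => y < v).Nonempty then
    v :: demChainFrom M (lPred M v h)
  else [v]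
termination_by (Finset.univ.filter fun y => y < v).card
decreasing_by
  refine Finset.card_lt_card ((Finset.ssubset_iff_of_subset fun z hz => ?_).mpr
    ⟨lPred M v h, by simp [lPred_lt M v h], by simp⟩)
  simp only [Finset.mem_filter, Finset.mem_univ, true_and] at hz ⊢
  exact hz.trans (lPred_lt M v h)

lemma demChainFrom_of_nonempty (M : Labeling P) {v : P}
    (h : (Finset.univ.filter fun y => y < v).Nonempty) :
    demChainFrom M v = v :: demChainFrom M (lPred M v h) := by
  rw [demChainFrom, dif_pos h]

lemma demChainFrom_of_not_nonempty (M : Labeling P) {v : P}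
    (h : ¬ (Finset.univ.filter fun y => y < v).Nonempty) : demChainFrom M v = [v] := by
  rw [demChainFrom, dif_neg h]

lemma demChainFrom_eq_cons_tail (M : Labeling P) (v : P) :
    demChainFrom M v = v :: (demChainFrom M v).tail := by
  by_cases h : (Finset.univ.filter fun y => y < v).Nonempty
  · rw [demChainFrom_of_nonempty M h, List.tail_cons]
  · rw [demChainFrom_of_not_nonempty M h, List.tail_cons]

variable [Nonempty P]

def demote (M : Labeling P) : Labeling P :=
  ((demChainFrom M (M.symm (topFin P))).formPerm.trans M).trans (finRotate _)

variable {L : Labeling P}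

lemma lPred_promote_lSucc (hL : IsLinearExt L) {x : P} (hx : x ∈ promChain L)
    (h : (Finset.univ.filter fun y => x < y).Nonempty)
    (h' : (Finset.univ.filter fun y => y < lSucc L x h).Nonempty) :
    lPred (promote L) (lSucc L x h) h' = x := by
  refine lPred_eq_of_forall_le (lt_lSucc L x h) (fun w hw => Fin.le_def.mpr ?_) h'
  have hx' := promote_add_one_of_mem L hx h
  by_cases hwC : w ∈ promChain L
  · obtain rfl | hwx := eq_or_ne w x
    · rfl
    have hw' := promote_add_one_of_mem L hwC ⟨_, by simpa using hw⟩
    rcases le_total_of_mem_promChainFrom L hwC hx with hle | hle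
    · have h1 := apply_lSucc_le L ⟨_, by simpa using hw⟩ (hle.lt_of_ne hwx)
      have h2 := hL _ _ (lt_lSucc L x h).le
      rw [Fin.le_def] at h1 h2
      omega
    · have h1 := apply_lSucc_le L h (hle.lt_of_ne hwx.symm)
      exact absurd h1 (hL.apply_lt_apply hw).not_ge
  · have hw' := promote_add_one_of_notMem L hwC
    have := Fin.lt_def.mp (hL.apply_lt_apply hw)
    omega

lemma demChainFrom_promote_firstLabeled (hL : IsLinearExt L) :
    demChainFrom (promote L) (firstLabeled L) = [firstLabeled L] := by
  refine demChainFrom_of_not_nonempty _ fun ⟨w, hw⟩ => ?_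
  have := hL.apply_lt_apply (by simpa using hw)
  simp [firstLabeled] at this

lemma demChainFrom_promote_of_not_nonempty (hL : IsLinearExt L) {u x : P}
    (hu : promChainFrom L u ⊆ promChain L)
    (hx : x ∈ promChainFrom L u) (hmax : ¬ (Finset.univ.filter fun y => x < y).Nonempty) :
    demChainFrom (promote L) x =
      (promChainFrom L u).reverse ++ (demChainFrom (promote L) u).tail := by
  induction u using promChainFrom.induct L with
  | case1 u h ih =>
    rw [promChainFrom_of_nonempty L h] at hu hx
    have h' : (Finset.univ.filter fun y => y < lSucc L u h).Nonempty :=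
      ⟨u, by simpa using lt_lSucc L u h⟩
    have hpred := lPred_promote_lSucc hL (hu List.mem_cons_self) h h'
    rcases List.mem_cons.mp hx with rfl | hx
    · exact absurd h hmax
    rw [ih (fun _ hy => hu (List.mem_cons_of_mem _ hy)) hx, promChainFrom_of_nonempty L h,
      demChainFrom_of_nonempty _ h', hpred, List.tail_cons, List.reverse_cons, List.append_assoc,
      List.singleton_append, ← demChainFrom_eq_cons_tail]
  | case2 u h =>
    rw [promChainFrom_of_not_nonempty L h, List.mem_singleton] at hx
    rw [hx, promChainFrom_of_not_nonempty L h, List.reverse_singleton, List.singleton_append,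
      ← demChainFrom_eq_cons_tail]

lemma demChainFrom_promote_topFin (hL : IsLinearExt L) :
    demChainFrom (promote L) ((promote L).symm (topFin P)) = (promChain L).reverse := by
  obtain ⟨x, hx, hmax⟩ := exists_mem_promChainFrom_not_nonempty L (firstLabeled L)
  rw [← promote_of_mem_of_not_nonempty L hx hmax, Equiv.symm_apply_apply,
    demChainFrom_promote_of_not_nonempty hL (List.Subset.refl _) hx hmax,
    demChainFrom_promote_firstLabeled hL]
  exact List.append_nil _

lemma demote_promote (hL : IsLinearExt L) : demote (promote L) = L := by
  ext x
  rw [demote, Equiv.trans_apply, Equiv.trans_apply, demChainFrom_promote_topFin hL,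
    List.formPerm_reverse, promote_apply]
  simp

end Demotion

lemma mapsTo_promote_setOf_isLinearExt [Nonempty P] :
    Set.MapsTo promote {L : Labeling P | IsLinearExt L} {L | IsLinearExt L} :=
  fun _ hL => IsLinearExt.promote hL

lemma injOn_promote_setOf_isLinearExt [Nonempty P] :
    Set.InjOn promote {L : Labeling P | IsLinearExt L} :=
  Set.LeftInvOn.injOn (f₁' := demote) fun _ hL => demote_promote hL

/-- A labeling is a periodic point of extended promotion if and only
if it is a linear extension. -/
theorem periodic_iff_linearExt (L : Labeling P) :
    (∃ k : ℕ, 1 ≤ k ∧ promote^[k] L = L) ↔ IsLinearExt L := by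
  cases isEmpty_or_nonempty P
  · exact ⟨fun _ x => isEmptyElim x, fun _ => ⟨1, le_rfl, by simp [promote]⟩⟩
  change L ∈ Function.periodicPts promote ↔ _
  constructor
  · rintro ⟨k, hk, hper⟩
    have hfrozen := topLabelsFrozen_promote_iterate L (k * Fintype.card P)
    rw [(hper.mul_const _).eq] at hfrozen
    exact hfrozen.isLinearExt (Nat.le_mul_of_pos_left _ hk)
  · exact mapsTo_promote_setOf_isLinearExt.mem_periodicPts_of_injOn
      injOn_promote_setOf_isLinearExt

end
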